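/- Let G = (V,E) be a finite simple graph, M ≥ 1, and let G̃ be the M-cover of G determined by a permutation voltage assignment α. Then the subdivision graph (G̃)′ of G̃ is isomorphic to an M-cover of the subdivision graph G′ of G: there is a permutation voltage assignment β on G′ and a graph isomorphism from (G̃)′ to the M-cover of G′ determined by β which commutes with the natural projections to G′. -/

import Mathlib

/-!
Orient every edge `e` of `G` as `(u₁, u₂)`. The lifts of `e` to the cover `G̃` are then exactly
the edges `ẽₖ = {(u₁, k), (u₂, α u₁ u₂ k)}`, `k : Fin M`, each obtained once. Sending the
subdivision vertex `ẽₖ` to `(e, k)` identifies `(G̃)′` with the cover of `G′` whose voltage is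
trivial on `(u₁, e)` and is `(α u₁ u₂)⁻¹` on `(u₂, e)`: the vertex `(u₁, k)` meets `ẽₖ` in
sheet `k`, and `(u₂, α u₁ u₂ k)` meets it after undoing `α u₁ u₂`.
-/

open scoped Classical

/-- Multivariate independence polynomial of `G`: sum over independent sets `I`
of `∏ v ∈ I, X v`. -/
noncomputable def indepPoly {V : Type} [Fintype V] (G : SimpleGraph V) :
    MvPolynomial V ℝ :=
  ∑ I ∈ Finset.univ.filter (fun I : Finset V => ∀ u ∈ I, ∀ v ∈ I, ¬ G.Adj u v),
    ∏ v ∈ I, MvPolynomial.X v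

/-- A permutation voltage assignment on `G` with values in `S_M`:
`α u v = (α v u)⁻¹` on directed edges, and (as a normalization) `α u v = 1`
on non-adjacent pairs. -/
def IsVoltage {V : Type} (G : SimpleGraph V) (M : ℕ)
    (α : V → V → Equiv.Perm (Fin M)) : Prop :=
  (∀ u v, G.Adj u v → α v u = (α u v)⁻¹) ∧ (∀ u v, ¬ G.Adj u v → α u v = 1)

/-- The `M`-cover of `G` determined by a voltage assignment `α`:
`(u,k)` is adjacent to `(v,l)` exactly when `u ~ v` in `G` and `l = α u v k`. -/
def cover {V : Type} (G : SimpleGraph V) (M : ℕ)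
    (α : V → V → Equiv.Perm (Fin M)) : SimpleGraph (V × Fin M) :=
  SimpleGraph.fromRel (fun p q => G.Adj p.1 q.1 ∧ q.2 = α p.1 q.1 p.2)

/-- Partition function of the binary pairwise model on `G` with interactions `J, h`. -/
noncomputable def partitionZ {V : Type} [Fintype V] (G : SimpleGraph V)
    (J : Sym2 V → ℝ) (h : V → ℝ) : ℝ :=
  ∑ s : V → Bool, Real.exp
    ((∑ e ∈ G.edgeFinset,
        J e * Sym2.lift ⟨fun u v => (if s u then (1:ℝ) else 0) * (if s v then (1:ℝ) else 0),
          fun u v => by ring⟩ e)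
      + ∑ v, h v * (if s v then (1:ℝ) else 0))

/-- The subdivision graph `G'` of `G`: vertices `V ⊔ E`, with `v ∈ V` adjacent to
`e ∈ E` exactly when `v` is an endpoint of `e`. -/
def subdivision {V : Type} (G : SimpleGraph V) : SimpleGraph (V ⊕ G.edgeSet) :=
  SimpleGraph.fromRel (fun a b =>
    ∃ (v : V) (e : G.edgeSet), a = Sum.inl v ∧ b = Sum.inr e ∧ v ∈ (e : Sym2 V))

open SimpleGraph

variable {V : Type} {G : SimpleGraph V} {M : ℕ} {α : V → V → Equiv.Perm (Fin M)}

lemma IsVoltage.cover_adj_iff (hα : IsVoltage G M α) {p q : V × Fin M} :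
    (cover G M α).Adj p q ↔ G.Adj p.1 q.1 ∧ q.2 = α p.1 q.1 p.2 := by
  rw [cover, fromRel_adj]
  constructor
  · rintro ⟨-, h | ⟨hadj, h⟩⟩
    · exact h
    · rw [hα.1 _ _ hadj.symm, Equiv.Perm.eq_inv_iff_eq] at h
      exact ⟨hadj.symm, h.symm⟩
  · rintro ⟨hadj, h⟩
    exact ⟨fun hpq => hadj.ne (congrArg Prod.fst hpq), Or.inl ⟨hadj, h⟩⟩

lemma cover_adj_of_adj {u v : V} (h : G.Adj u v) (k : Fin M) :
    (cover G M α).Adj (u, k) (v, α u v k) := by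
  rw [cover, fromRel_adj]
  exact ⟨fun huv => h.ne (congrArg Prod.fst huv), Or.inl ⟨h, rfl⟩⟩

@[simp]
lemma subdivision_adj_inl_inr {v : V} {e : G.edgeSet} :
    (subdivision G).Adj (.inl v) (.inr e) ↔ v ∈ (e : Sym2 V) := by
  simp [subdivision, fromRel_adj]

@[simp]
lemma not_subdivision_adj_inl_inl {v w : V} : ¬ (subdivision G).Adj (.inl v) (.inl w) := by
  simp [subdivision, fromRel_adj]

@[simp]
lemma not_subdivision_adj_inr_inr {e f : G.edgeSet} : ¬ (subdivision G).Adj (.inr e) (.inr f) := by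
  simp [subdivision, fromRel_adj]

noncomputable def orient (e : G.edgeSet) : V × V := Quot.out (e : Sym2 V)

lemma mk_orient (e : G.edgeSet) : s((orient e).1, (orient e).2) = e := Quot.out_eq _

lemma adj_orient (e : G.edgeSet) : G.Adj (orient e).1 (orient e).2 := by
  rw [← mem_edgeSet, mk_orient]
  exact e.2

lemma mem_iff_eq_orient {e : G.edgeSet} {v : V} :
    v ∈ (e : Sym2 V) ↔ v = (orient e).1 ∨ v = (orient e).2 := by
  rw [← mk_orient e, Sym2.mem_iff]

section Lifts

variable (G M α)

noncomputable def liftEdge (x : G.edgeSet × Fin M) : (cover G M α).edgeSet :=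
  ⟨s(((orient x.1).1, x.2), ((orient x.1).2, α (orient x.1).1 (orient x.1).2 x.2)),
    cover_adj_of_adj (adj_orient x.1) x.2⟩

variable {G M α}

lemma map_fst_liftEdge (x : G.edgeSet × Fin M) :
    Sym2.map Prod.fst (liftEdge G M α x : Sym2 (V × Fin M)) = x.1 := by
  simp only [liftEdge, Sym2.map_mk]
  exact mk_orient x.1

lemma liftEdge_injective : Function.Injective (liftEdge G M α) := by
  rintro ⟨e, k⟩ ⟨f, l⟩ h
  obtain rfl : e = f := Subtype.ext <| by
    rw [← map_fst_liftEdge (α := α) (e, k), ← map_fst_liftEdge (α := α) (f, l), h]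
  have hkl := congrArg Subtype.val h
  simp only [liftEdge, Sym2.eq_iff, Prod.mk.injEq] at hkl
  rcases hkl with ⟨⟨-, rfl⟩, -⟩ | ⟨⟨h₁₂, -⟩, -⟩
  · rfl
  · exact absurd h₁₂ (adj_orient e).ne

lemma liftEdge_surjective (hα : IsVoltage G M α) : Function.Surjective (liftEdge G M α) := by
  rintro ⟨c, hc⟩
  induction c using Sym2.ind with
  | _ p q =>
    obtain ⟨u, k⟩ := p
    obtain ⟨v, l⟩ := q
    obtain ⟨hadj, rfl⟩ : G.Adj u v ∧ l = α u v k := hα.cover_adj_iff.mp hc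
    let e : G.edgeSet := ⟨s(u, v), hadj⟩
    rcases Sym2.eq_iff.mp (mk_orient e) with ⟨h₁, h₂⟩ | ⟨h₁, h₂⟩
    · exact ⟨(e, k), Subtype.ext (by simp only [liftEdge, h₁, h₂])⟩
    · refine ⟨(e, α u v k), Subtype.ext ?_⟩
      simp [liftEdge, h₁, h₂, hα.1 _ _ hadj, Sym2.eq_swap]

noncomputable def coverEdgeEquiv (hα : IsVoltage G M α) :
    G.edgeSet × Fin M ≃ (cover G M α).edgeSet :=
  Equiv.ofBijective _ ⟨liftEdge_injective, liftEdge_surjective hα⟩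

@[simp]
lemma coverEdgeEquiv_apply (hα : IsVoltage G M α) (x : G.edgeSet × Fin M) :
    coverEdgeEquiv hα x = liftEdge G M α x := rfl

lemma map_fst_coverEdgeEquiv_symm (hα : IsVoltage G M α) (c : (cover G M α).edgeSet) :
    (((coverEdgeEquiv hα).symm c).1 : Sym2 V) = Sym2.map Prod.fst (c : Sym2 (V × Fin M)) := by
  conv_rhs => rw [← (coverEdgeEquiv hα).apply_symm_apply c]
  exact (map_fst_liftEdge _).symm

end Lifts

section SubdivisionVoltage

variable (G M α)

noncomputable def subdivisionVoltage :
    V ⊕ G.edgeSet → V ⊕ G.edgeSet → Equiv.Perm (Fin M)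
  | .inl v, .inr e => if v = (orient e).2 then (α (orient e).1 (orient e).2)⁻¹ else 1
  | .inr e, .inl v => if v = (orient e).2 then α (orient e).1 (orient e).2 else 1
  | _, _ => 1

variable {G M α}

lemma isVoltage_subdivisionVoltage : IsVoltage (subdivision G) M (subdivisionVoltage G M α) := by
  constructor
  · rintro (v | e) (w | f) hadj <;> simp only [subdivisionVoltage] <;> (try split_ifs) <;> simp
  · have head_adj {v : V} {e : G.edgeSet} (h : v = (orient e).2) :
        (subdivision G).Adj (.inl v) (.inr e) :=
      subdivision_adj_inl_inr.2 (mem_iff_eq_orient.2 (.inr h))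
    rintro (v | e) (w | f) hadj
    · rfl
    · exact if_neg fun h => hadj (head_adj h)
    · exact if_neg fun h => hadj (head_adj h).symm
    · rfl

lemma cover_subdivision_adj_iff_mem_liftEdge (v : V) (k : Fin M) (e : G.edgeSet) (l : Fin M) :
    (cover (subdivision G) M (subdivisionVoltage G M α)).Adj (.inl v, k) (.inr e, l) ↔
      (v, k) ∈ (liftEdge G M α (e, l) : Sym2 (V × Fin M)) := by
  rw [isVoltage_subdivisionVoltage.cover_adj_iff]
  simp only [liftEdge, Sym2.mem_iff, Prod.mk.injEq, subdivision_adj_inl_inr, mem_iff_eq_orient,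
    subdivisionVoltage]
  have hne := (adj_orient e).ne
  by_cases h₂ : v = (orient e).2
  · subst h₂
    simpa [hne.symm, Equiv.eq_symm_apply] using eq_comm
  · simp [h₂, eq_comm]

end SubdivisionVoltage

noncomputable def coverSubdivisionIso (hα : IsVoltage G M α) :
    cover (subdivision G) M (subdivisionVoltage G M α) ≃g subdivision (cover G M α) where
  toEquiv := (Equiv.sumProdDistrib _ _ _).trans (Equiv.sumCongr (.refl _) (coverEdgeEquiv hα))
  map_rel_iff' := by
    rintro ⟨v | e, k⟩ ⟨w | f, l⟩ <;>
      simp only [Equiv.trans_apply, Equiv.sumProdDistrib_apply_left,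
        Equiv.sumProdDistrib_apply_right, Equiv.sumCongr_apply, Sum.map_inl, Sum.map_inr,
        Equiv.refl_apply, coverEdgeEquiv_apply]
    · simp [isVoltage_subdivisionVoltage.cover_adj_iff]
    · rw [subdivision_adj_inl_inr, cover_subdivision_adj_iff_mem_liftEdge]
    · rw [adj_comm, subdivision_adj_inl_inr, adj_comm, cover_subdivision_adj_iff_mem_liftEdge]
    · simp [isVoltage_subdivisionVoltage.cover_adj_iff]

theorem stmt10_general {V : Type} (G : SimpleGraph V) (M : ℕ)
    (α : V → V → Equiv.Perm (Fin M)) (hα : IsVoltage G M α) :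
    ∃ β : (V ⊕ G.edgeSet) → (V ⊕ G.edgeSet) → Equiv.Perm (Fin M),
      IsVoltage (subdivision G) M β ∧
      ∃ φ : subdivision (cover G M α) ≃g cover (subdivision G) M β,
        ∀ w : (V × Fin M) ⊕ (cover G M α).edgeSet,
          Sum.map id Subtype.val (φ w).1
            = Sum.elim (fun p : V × Fin M => Sum.inl p.1)
                (fun e : (cover G M α).edgeSet =>
                  Sum.inr (Sym2.map Prod.fst e.val)) w := by
  refine ⟨subdivisionVoltage G M α, isVoltage_subdivisionVoltage,
    (coverSubdivisionIso hα).symm, ?_⟩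
  rintro (p | c)
  · rfl
  · simp [coverSubdivisionIso, map_fst_coverEdgeEquiv_symm]

/-- the subdivision of an `M`-cover of `G` is isomorphic to an
`M`-cover of the subdivision `G'` of `G`, via an isomorphism commuting with the
natural projections to `G'` (compared inside `V ⊕ Sym2 V`). -/
theorem stmt10 {V : Type} [Fintype V] (G : SimpleGraph V) (M : ℕ) (hM : 1 ≤ M)
    (α : V → V → Equiv.Perm (Fin M)) (hα : IsVoltage G M α) :
    ∃ β : (V ⊕ G.edgeSet) → (V ⊕ G.edgeSet) → Equiv.Perm (Fin M),
      IsVoltage (subdivision G) M β ∧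
      ∃ φ : subdivision (cover G M α) ≃g cover (subdivision G) M β,
        ∀ w : (V × Fin M) ⊕ (cover G M α).edgeSet,
          Sum.map id Subtype.val (φ w).1
            = Sum.elim (fun p : V × Fin M => Sum.inl p.1)
                (fun e : (cover G M α).edgeSet =>
                  Sum.inr (Sym2.map Prod.fst e.val)) w :=
  stmt10_general G M α hα
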